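/- arXiv:2403.04768 — 2 statements merged into one kernel-verified Lean document; each statement's English description precedes it below -/
import Mathlib

section
/- If p₁ < p₂ < p₃ are distinct primes, y > 0, γ ∈ [0, 2π), and y·ln(p₁) = 2ℓπ + γ, y·ln(p₂) = 2mπ + γ, y·ln(p₃) = 2nπ + γ for nonnegative integers ℓ, m, n, then a contradiction arises; i.e., no such configuration exists. -/
open Real

theorem stmt_1 (p₁ p₂ p₃ : ℕ) (hp₁ : p₁.Prime) (hp₂ : p₂.Prime) (hp₃ : p₃.Prime)
    (h12 : p₁ < p₂) (h23 : p₂ < p₃) (y γ : ℝ) (hy : 0 < y)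
    (hγ0 : 0 ≤ γ) (hγ2 : γ < 2 * π) (ℓ m n : ℕ)
    (h1 : y * Real.log p₁ = 2 * ℓ * π + γ)
    (h2 : y * Real.log p₂ = 2 * m * π + γ)
    (h3 : y * Real.log p₃ = 2 * n * π + γ) : False := by
  have hπ : 0 < π := Real.pi_pos
  have hp1pos : (0:ℝ) < p₁ := by exact_mod_cast hp₁.pos
  have hp2pos : (0:ℝ) < p₂ := by exact_mod_cast hp₂.pos
  have hp3pos : (0:ℝ) < p₃ := by exact_mod_cast hp₃.pos
  have hl12 : Real.log p₁ < Real.log p₂ :=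
    Real.log_lt_log hp1pos (by exact_mod_cast h12)
  have hl23 : Real.log p₂ < Real.log p₃ :=
    Real.log_lt_log hp2pos (by exact_mod_cast h23)
  have hlm : ℓ < m := by
    have : y * Real.log p₁ < y * Real.log p₂ := by
      exact mul_lt_mul_of_pos_left hl12 hy
    rw [h1, h2] at this
    have : (ℓ:ℝ) < m := by nlinarith
    exact_mod_cast this
  have hmn : m < n := by
    have : y * Real.log p₂ < y * Real.log p₃ := by
      exact mul_lt_mul_of_pos_left hl23 hy
    rw [h2, h3] at this
    have : (m:ℝ) < n := by nlinarith
    exact_mod_cast this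
  set a := n - m with ha
  set b := m - ℓ with hb
  have hacast : (a:ℝ) = (n:ℝ) - m := by
    rw [ha]; push_cast [Nat.cast_sub hmn.le]; ring
  have hbcast : (b:ℝ) = (m:ℝ) - ℓ := by
    rw [hb]; push_cast [Nat.cast_sub hlm.le]; ring
  have e1 : y * (Real.log p₂ - Real.log p₁) = 2 * (b:ℝ) * π := by
    rw [hbcast]; nlinarith [h1, h2]
  have e2 : y * (Real.log p₃ - Real.log p₂) = 2 * (a:ℝ) * π := by
    rw [hacast]; nlinarith [h2, h3]
  have key : (a:ℝ) * (Real.log p₂ - Real.log p₁)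
      = (b:ℝ) * (Real.log p₃ - Real.log p₂) := by
    have h : y * ((a:ℝ) * (Real.log p₂ - Real.log p₁))
        = y * ((b:ℝ) * (Real.log p₃ - Real.log p₂)) := by
      linear_combination (a:ℝ) * e1 - (b:ℝ) * e2
    exact mul_left_cancel₀ hy.ne' h
  have hlogeq : Real.log ((p₂:ℝ) ^ (a + b))
      = Real.log ((p₁:ℝ) ^ a * (p₃:ℝ) ^ b) := by
    rw [Real.log_pow, Real.log_mul (by positivity) (by positivity),
      Real.log_pow, Real.log_pow]
    push_cast
    linarith [key]
  have heqR : ((p₂:ℝ)) ^ (a + b) = (p₁:ℝ) ^ a * (p₃:ℝ) ^ b := by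
    have h1' : (0:ℝ) < (p₂:ℝ) ^ (a + b) := by positivity
    have h2' : (0:ℝ) < (p₁:ℝ) ^ a * (p₃:ℝ) ^ b := by positivity
    exact Real.log_injOn_pos (Set.mem_Ioi.mpr h1') (Set.mem_Ioi.mpr h2') hlogeq
  have heqN : p₂ ^ (a + b) = p₁ ^ a * p₃ ^ b := by exact_mod_cast heqR
  have hdvd : p₁ ∣ p₂ ^ (a + b) := by
    rw [heqN]
    exact Dvd.dvd.mul_right (dvd_pow_self p₁ (by omega : a ≠ 0)) _
  have := (Nat.prime_dvd_prime_iff_eq hp₁ hp₂).mp (hp₁.dvd_of_dvd_pow hdvd)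
  omega
end

section
/- Let y > 0, α ∈ [0, 2π), and K ∈ (0, 1). Then the sum of 1/p over all primes p satisfying cos(y·ln p + α) > K diverges. -/
/-!
Put `θ_p = y log p + α`. Since `ζ` has no zeros on `Re s = 1` and
`log ζ(s) = ∑_p p^{-s} + O(1)`, for every integer `m ≠ 0` the sum
`∑_p p^{-σ} cos (m θ_p) = Re (e^{imα} ∑_p p^{-(σ - imy)})` stays bounded as `σ → 1⁺`, while
`∑_p p^{-σ}` does not (as `∑_p 1/p = ∞`). Multiply `cos θ - K` by the Fejér-type kernel
`F_N(θ) = |∑_{k<N} e^{ikθ}|² ≥ 0`: the product is a trigonometric polynomial with constant term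
`N - 1 - KN`, positive for large `N`; it is `≤ 0` off `P⁺` and `≤ (1 - K) N²` on `P⁺`.
Summing it against `p^{-σ}` gives
`(N - 1 - KN) ∑_p p^{-σ} - O(1) ≤ (1 - K) N² ∑_{p ∈ P⁺} 1/p`, so the right side is infinite.
-/

open Real

section PrimeZeta

open Complex Set

-- `g` agrees with the lift of the path `f` along the covering map `exp : ℂ → ℂ \ {0}`,
-- which is defined on all of `[a, b]`.
theorem Complex.exists_bound_of_exp_eq {f g : ℝ → ℂ} {a b : ℝ}
    (hf : ContinuousOn f (Icc a b)) (hf0 : ∀ x ∈ Icc a b, f x ≠ 0)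
    (hg : ContinuousOn g (Ioc a b)) (hfg : ∀ x ∈ Ioc a b, exp (g x) = f x) :
    ∃ C, ∀ x ∈ Ioc a b, ‖g x‖ ≤ C := by
  rcases le_or_gt b a with hba | hab
  · exact ⟨0, fun x hx => absurd (hx.1.trans_le hx.2) hba.not_gt⟩
  have hmaps (s : unitInterval) : b - s * (b - a) ∈ Icc a b := by
    obtain ⟨hs0, hs1⟩ := s.2
    constructor <;> nlinarith
  let γ : C(unitInterval, {z : ℂ // z ≠ 0}) :=
    ⟨fun s => ⟨f (b - s * (b - a)), hf0 _ (hmaps s)⟩,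
      (hf.comp_continuous (by fun_prop) hmaps).subtype_mk _⟩
  obtain ⟨Γ, hΓ, hΓ0⟩ := isCoveringMap_exp.exists_path_lifts γ (g b)
    (Subtype.ext (hfg b ⟨hab, le_rfl⟩ |>.trans (by simp [γ])).symm)
  let φ : ℝ → ℂ := fun x => Γ (projIcc 0 1 zero_le_one ((b - x) / (b - a)))
  have hφ : Continuous φ := Γ.continuous.comp (continuous_projIcc.comp (by fun_prop))
  have hgφ : EqOn g φ (Ioc a b) := by
    refine isCoveringMap_exp.eqOn_of_comp_eqOn isPreconnected_Ioc hg hφ.continuousOn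
      (fun x hx => ?_) (right_mem_Ioc.2 hab) (by simp [φ, hΓ0])
    have hs : (b - x) / (b - a) ∈ Icc (0 : ℝ) 1 :=
      ⟨div_nonneg (by linarith [hx.2]) (by linarith),
        (div_le_one (by linarith)).2 (by linarith [hx.1])⟩
    have hΓx := congrArg Subtype.val (congrFun hΓ (projIcc 0 1 zero_le_one ((b - x) / (b - a))))
    simp only [Function.comp_apply, γ, ContinuousMap.coe_mk, projIcc_of_mem _ hs,
      div_mul_cancel₀ _ (sub_ne_zero.2 hab.ne'), sub_sub_cancel] at hΓx
    refine Subtype.ext ((hfg x hx).trans (hΓx.symm.trans ?_))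
    simp [φ, projIcc_of_mem _ hs]
  obtain ⟨C, hC⟩ := (isCompact_range Γ.continuous).isBounded.exists_norm_le
  exact ⟨C, fun x hx => hgφ hx ▸ hC _ (mem_range_self _)⟩

noncomputable def primeZeta (s : ℂ) : ℂ := ∑' p : Nat.Primes, (p : ℂ) ^ (-s)

noncomputable def logZeta (s : ℂ) : ℂ := ∑' p : Nat.Primes, -log (1 - (p : ℂ) ^ (-s))

lemma norm_prime_cpow_neg (p : Nat.Primes) (s : ℂ) :
    ‖(p : ℂ) ^ (-s)‖ = (p : ℝ) ^ (-s.re) :=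
  norm_natCast_cpow_of_pos p.prop.pos _

lemma norm_prime_cpow_neg_le_inv {p : Nat.Primes} {s : ℂ} (hs : 1 ≤ s.re) :
    ‖(p : ℂ) ^ (-s)‖ ≤ (p : ℝ)⁻¹ := by
  rw [norm_prime_cpow_neg, ← Real.rpow_neg_one]
  exact Real.rpow_le_rpow_of_exponent_le (mod_cast p.prop.one_le) (by linarith)

lemma norm_prime_cpow_neg_le_half {p : Nat.Primes} {s : ℂ} (hs : 1 ≤ s.re) :
    ‖(p : ℂ) ^ (-s)‖ ≤ 1 / 2 := by
  refine (norm_prime_cpow_neg_le_inv hs).trans ?_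
  rw [one_div]
  exact inv_anti₀ two_pos (mod_cast p.prop.two_le)

lemma summable_prime_cpow_neg {s : ℂ} (hs : 1 < s.re) :
    Summable fun p : Nat.Primes => (p : ℂ) ^ (-s) :=
  .of_norm <| by simpa only [norm_prime_cpow_neg, neg_re] using
    Nat.Primes.summable_rpow.mpr (neg_lt_neg hs)

lemma norm_neg_log_one_sub_sub_self_le {z : ℂ} (hz : ‖z‖ ≤ 1 / 2) :
    ‖-log (1 - z) - z‖ ≤ ‖z‖ ^ 2 := by
  have h := norm_log_one_add_sub_self_le (z := -z) (by rw [norm_neg]; linarith)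
  rw [norm_neg, sub_neg_eq_add, ← sub_eq_add_neg] at h
  rw [← norm_neg, neg_sub_left, neg_neg, add_comm]
  refine h.trans ?_
  have : (1 - ‖z‖)⁻¹ ≤ 2 := by rw [inv_le_comm₀ (by linarith) two_pos]; linarith
  nlinarith [sq_nonneg ‖z‖]

lemma norm_logZeta_sub_primeZeta_le {s : ℂ} (hs : 1 < s.re) :
    ‖logZeta s - primeZeta s‖ ≤ ∑' p : Nat.Primes, ((p : ℝ) ^ 2)⁻¹ := by
  have hsq : Summable fun p : Nat.Primes => ((p : ℝ) ^ 2)⁻¹ := by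
    simpa only [← Real.rpow_natCast, ← Real.rpow_neg (Nat.cast_nonneg _)] using
      Nat.Primes.summable_rpow.mpr (by norm_num : -((2 : ℕ) : ℝ) < -1)
  have hle (p : Nat.Primes) :
      ‖-log (1 - (p : ℂ) ^ (-s)) - (p : ℂ) ^ (-s)‖ ≤ ((p : ℝ) ^ 2)⁻¹ := by
    refine (norm_neg_log_one_sub_sub_self_le (norm_prime_cpow_neg_le_half hs.le)).trans ?_
    rw [← inv_pow]
    exact pow_le_pow_left₀ (norm_nonneg _) (norm_prime_cpow_neg_le_inv hs.le) 2
  have hP := summable_prime_cpow_neg hs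
  rw [logZeta, primeZeta, ← hP.clog_one_sub.neg.tsum_sub hP]
  exact tsum_of_norm_bounded hsq.hasSum hle

lemma continuousOn_logZeta_of_le {a : ℝ} (ha : 1 < a) :
    ContinuousOn logZeta {s | a ≤ s.re} := by
  refine continuousOn_tsum (u := fun p : Nat.Primes => 3 / 2 * (p : ℝ) ^ (-a))
    (fun p => ?_) ((Nat.Primes.summable_rpow.mpr (by linarith)).mul_left _) fun p s hs => ?_
  · have hcpow : Continuous fun s : ℂ => (p : ℂ) ^ (-s) :=
      continuous_neg.const_cpow (.inl (mod_cast p.prop.ne_zero))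
    refine ((continuous_const.sub hcpow).continuousOn.clog fun s hs => ?_).neg
    change 1 - (p : ℂ) ^ (-s) ∈ slitPlane
    rw [sub_eq_add_neg]
    refine mem_slitPlane_of_norm_lt_one ?_
    rw [norm_neg]
    exact (norm_prime_cpow_neg_le_half (ha.le.trans hs)).trans_lt (by norm_num)
  · have hs1 : 1 ≤ s.re := ha.le.trans hs
    rw [norm_neg, sub_eq_add_neg]
    refine (norm_log_one_add_half_le_self
      (by rw [norm_neg]; exact norm_prime_cpow_neg_le_half hs1)).trans ?_
    rw [norm_neg, norm_prime_cpow_neg]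
    gcongr
    · exact_mod_cast p.prop.one_le
    · exact hs

lemma continuousOn_logZeta : ContinuousOn logZeta {s | 1 < s.re} := by
  intro s (hs : 1 < s.re)
  have hnhds : {z : ℂ | (1 + s.re) / 2 ≤ z.re} ∈ nhds s :=
    Filter.mem_of_superset ((isOpen_lt continuous_const continuous_re).mem_nhds
      (show (1 + s.re) / 2 < s.re by linarith)) fun z (hz : _ < z.re) => hz.le
  exact ((continuousOn_logZeta_of_le (by linarith)).continuousAt hnhds).continuousWithinAt

lemma exists_bound_norm_primeZeta {t : ℝ} (ht : t ≠ 0) :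
    ∃ C, ∀ σ ∈ Ioc (1 : ℝ) 2, ‖primeZeta (σ + t * I)‖ ≤ C := by
  have hline : Continuous fun σ : ℝ => (σ : ℂ) + t * I := by fun_prop
  have hre (σ : ℝ) : ((σ : ℂ) + t * I).re = σ := by simp
  obtain ⟨C, hC⟩ := Complex.exists_bound_of_exp_eq (a := 1) (b := 2)
    (f := fun σ : ℝ => riemannZeta (σ + t * I)) (g := fun σ : ℝ => logZeta (σ + t * I))
    (fun σ _ => (differentiableAt_riemannZeta fun h => ht (by simpa using congrArg im h))
      |>.continuousAt.comp_continuousWithinAt hline.continuousWithinAt)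
    (fun σ hσ => riemannZeta_ne_zero_of_one_le_re (by rw [hre]; exact hσ.1))
    (continuousOn_logZeta.comp hline.continuousOn fun σ hσ => by simpa [hre] using hσ.1)
    (fun σ hσ => riemannZeta_eulerProduct_exp_log (by rw [hre]; exact hσ.1))
  refine ⟨C + ∑' p : Nat.Primes, ((p : ℝ) ^ 2)⁻¹, fun σ hσ => ?_⟩
  calc ‖primeZeta (σ + t * I)‖
      ≤ ‖logZeta (σ + t * I)‖ + ‖logZeta (σ + t * I) - primeZeta (σ + t * I)‖ :=
        norm_le_insert _ _
    _ ≤ _ := add_le_add (hC σ hσ) (norm_logZeta_sub_primeZeta_le (by rw [hre]; exact hσ.1))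

end PrimeZeta

section Kernel

open Finset

variable {ι : Type*} {w θ v : ι → ℝ}

noncomputable def trigMoment (w θ : ι → ℝ) (m : ℝ) : ℝ := ∑' i, w i * cos (m * θ i)

-- `N` times the Fejér kernel, i.e. `|∑_{k<N} e^{ikx}|²`.
noncomputable def fejer (N : ℕ) (x : ℝ) : ℝ :=
  ∑ k ∈ range N, ∑ l ∈ range N, cos ((k - l : ℝ) * x)

lemma fejer_eq_sq_add_sq (N : ℕ) (x : ℝ) :
    fejer N x = (∑ k ∈ range N, cos (k * x)) ^ 2 + (∑ k ∈ range N, sin (k * x)) ^ 2 := by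
  simp only [fejer, sq, sum_mul_sum, ← sum_add_distrib, sub_mul, cos_sub]

lemma fejer_nonneg (N : ℕ) (x : ℝ) : 0 ≤ fejer N x := by
  rw [fejer_eq_sq_add_sq]; positivity

lemma fejer_le_sq (N : ℕ) (x : ℝ) : fejer N x ≤ N ^ 2 := by
  calc fejer N x ≤ ∑ k ∈ range N, ∑ l ∈ range N, (1 : ℝ) :=
        sum_le_sum fun _ _ => sum_le_sum fun _ _ => cos_le_one _
    _ = N ^ 2 := by simp [sq]

lemma cos_sub_mul_fejer (K : ℝ) (N : ℕ) (x : ℝ) :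
    (cos x - K) * fejer N x = ∑ k ∈ range N, ∑ l ∈ range N,
      (cos (((k + 1 : ℕ) - l : ℝ) * x) / 2 + cos ((k - (l + 1 : ℕ) : ℝ) * x) / 2
        - K * cos ((k - l : ℝ) * x)) := by
  simp only [fejer, mul_sum]
  refine sum_congr rfl fun k _ => sum_congr rfl fun l _ => ?_
  have h₁ : ((k + 1 : ℕ) - l : ℝ) * x = (k - l : ℝ) * x + x := by push_cast; ring
  have h₂ : (k - (l + 1 : ℕ) : ℝ) * x = (k - l : ℝ) * x - x := by push_cast; ring
  rw [h₁, h₂, cos_add, cos_sub]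
  ring

lemma summable_mul_cos (hw : Summable w) (m : ℝ) : Summable fun i => w i * cos (m * θ i) :=
  hw.abs.of_norm_bounded fun i => by
    rw [norm_mul, norm_eq_abs]; exact mul_le_of_le_one_right (abs_nonneg _) (abs_cos_le_one _)

lemma hasSum_mul_cos_sub_mul_fejer (hw : Summable w) (K : ℝ) (N : ℕ) :
    HasSum (fun i => w i * ((cos (θ i) - K) * fejer N (θ i)))
      (∑ k ∈ range N, ∑ l ∈ range N, (trigMoment w θ ((k + 1 : ℕ) - l) / 2
        + trigMoment w θ (k - (l + 1 : ℕ)) / 2 - K * trigMoment w θ (k - l))) := by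
  simp only [cos_sub_mul_fejer, mul_sum]
  refine hasSum_sum fun k _ => hasSum_sum fun l _ => ?_
  have h (m : ℝ) : HasSum (fun i => w i * cos (m * θ i)) (trigMoment w θ m) :=
    (summable_mul_cos hw m).hasSum
  exact ((((h _).div_const 2).add ((h _).div_const 2)).sub ((h _).mul_left K)).congr_fun
    fun i => by ring

lemma sum_range_sum_range_ite (n : ℕ) (K a : ℝ) :
    ∑ k ∈ range (n + 1), ∑ l ∈ range (n + 1), ((if k + 1 = l then a else 0) / 2
      + (if k = l + 1 then a else 0) / 2 - K * if k = l then a else 0)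
      = (n - K * (n + 1)) * a := by
  have h₁ : ∑ k ∈ range (n + 1), ∑ l ∈ range (n + 1), (if k + 1 = l then a else 0)
      = n * a := by
    simp only [sum_ite_eq, Finset.mem_range, add_lt_add_iff_right]
    rw [sum_range_succ, if_neg (lt_irrefl n), add_zero,
      sum_ite_of_true fun k hk => Finset.mem_range.1 hk]
    simp
  have h₂ : ∑ k ∈ range (n + 1), ∑ l ∈ range (n + 1), (if k = l + 1 then a else 0)
      = n * a := by
    rw [sum_comm]
    simpa only [eq_comm] using h₁
  have h₃ : ∑ k ∈ range (n + 1), ∑ l ∈ range (n + 1), (if k = l then a else 0)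
      = (n + 1) * a := by
    simp only [sum_ite_eq, sum_ite_mem, Finset.inter_self]
    simp
  simp only [sum_add_distrib, sum_sub_distrib, ← sum_div, ← mul_sum, h₁, h₂, h₃]
  ring

lemma le_tsum_mul_cos_sub_mul_fejer {n : ℕ} {K C : ℝ} (hw : Summable w) (hK : 0 ≤ K)
    (hC : ∀ m : ℤ, m ≠ 0 → |m| ≤ n + 1 → |trigMoment w θ m| ≤ C) :
    (n - K * (n + 1)) * ∑' i, w i - (1 + K) * (n + 1) ^ 2 * C ≤
      ∑' i, w i * ((cos (θ i) - K) * fejer (n + 1) (θ i)) := by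
  set S := ∑' i, w i
  have hC0 : 0 ≤ C := (abs_nonneg _).trans (hC 1 one_ne_zero (by simp))
  have hR (k l : ℕ) (hk : k ≤ n + 1) (hl : l ≤ n + 1) :
      |trigMoment w θ (k - l) - if k = l then S else 0| ≤ C := by
    split_ifs with h
    · simpa [h, trigMoment, S] using hC0
    · simpa using hC (k - l) (by omega) (abs_le.2 ⟨by omega, by omega⟩)
  rw [(hasSum_mul_cos_sub_mul_fejer hw K (n + 1)).tsum_eq, ← sum_range_sum_range_ite n K S]
  calc _ = ∑ k ∈ range (n + 1), ∑ l ∈ range (n + 1), (((if k + 1 = l then S else 0) / 2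
        + (if k = l + 1 then S else 0) / 2 - K * if k = l then S else 0) - (1 + K) * C) := by
        simp only [sum_sub_distrib, sum_const, card_range, nsmul_eq_mul]; push_cast; ring
    _ ≤ _ := sum_le_sum fun k hk => sum_le_sum fun l hl => by
        have hk := Finset.mem_range.1 hk
        have hl := Finset.mem_range.1 hl
        have h₁ := abs_le.1 (hR (k + 1) l (by omega) (by omega))
        have h₂ := abs_le.1 (hR k (l + 1) (by omega) (by omega))
        have h₃ := mul_le_mul_of_nonneg_left (abs_le.1 (hR k l (by omega) (by omega))).2 hK
        linarith [h₁.1, h₂.1]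

lemma tsum_mul_cos_sub_mul_fejer_le {K : ℝ} (N : ℕ) (hw : Summable w) (hw0 : 0 ≤ w)
    (hwv : w ≤ v) (hv : Summable (Set.indicator {i | K < cos (θ i)} v)) :
    ∑' i, w i * ((cos (θ i) - K) * fejer N (θ i)) ≤
      (1 - K) * N ^ 2 * ∑' i, Set.indicator {i | K < cos (θ i)} v i := by
  rw [← tsum_mul_left]
  refine (hasSum_mul_cos_sub_mul_fejer hw K N).summable.tsum_le_tsum (fun i => ?_) (hv.mul_left _)
  by_cases hi : K < cos (θ i)
  · rw [Set.indicator_of_mem (show i ∈ {i | K < cos (θ i)} from hi)]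
    have hK : 0 ≤ 1 - K := by linarith [cos_le_one (θ i)]
    have hF : (cos (θ i) - K) * fejer N (θ i) ≤ (1 - K) * N ^ 2 :=
      mul_le_mul (by linarith [cos_le_one (θ i)]) (fejer_le_sq N _) (fejer_nonneg N _) hK
    calc w i * ((cos (θ i) - K) * fejer N (θ i)) ≤ w i * ((1 - K) * N ^ 2) :=
          mul_le_mul_of_nonneg_left hF (hw0 i)
      _ ≤ v i * ((1 - K) * N ^ 2) := mul_le_mul_of_nonneg_right (hwv i) (by positivity)
      _ = _ := mul_comm _ _
  · rw [Set.indicator_of_notMem (show i ∉ {i | K < cos (θ i)} from hi), mul_zero]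
    exact mul_nonpos_of_nonneg_of_nonpos (hw0 i)
      (mul_nonpos_of_nonpos_of_nonneg (by linarith [not_lt.1 hi]) (fejer_nonneg N _))

end Kernel

lemma abs_trigMoment_prime_le {σ : ℝ} (hσ : 1 < σ) (y α m : ℝ) :
    |trigMoment (fun p : Nat.Primes => (p : ℝ) ^ (-σ)) (fun p => y * log p + α) m| ≤
      ‖primeZeta (σ + (-(m * y) : ℝ) * Complex.I)‖ := by
  set s : ℂ := σ + (-(m * y) : ℝ) * Complex.I
  have hterm (p : Nat.Primes) : (p : ℝ) ^ (-σ) * cos (m * (y * log p + α)) =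
      (Complex.exp (m * α * Complex.I) * (p : ℂ) ^ (-s)).re := by
    rw [Complex.cpow_def_of_ne_zero (mod_cast p.prop.ne_zero), ← Complex.exp_add,
      Complex.exp_re, Real.rpow_def_of_pos (mod_cast p.prop.pos)]
    simp [s, ← Complex.natCast_log]
    ring_nf
  rw [trigMoment, tsum_congr hterm, ← Complex.re_tsum ((summable_prime_cpow_neg
    (by simpa [s] using hσ)).mul_left _), tsum_mul_left]
  refine (Complex.abs_re_le_norm _).trans ?_
  simp [Complex.norm_exp, primeZeta]

lemma exists_bound_abs_trigMoment_prime {y : ℝ} (hy : 0 < y) (α : ℝ) (L : ℕ) :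
    ∃ C, ∀ σ ∈ Set.Ioc (1 : ℝ) 2, ∀ m : ℤ, m ≠ 0 → |m| ≤ L →
      |trigMoment (fun p : Nat.Primes => (p : ℝ) ^ (-σ)) (fun p => y * log p + α) m| ≤ C := by
  have h (m : ℤ) (hm : m ≠ 0) : ∃ C, ∀ σ ∈ Set.Ioc (1 : ℝ) 2,
      |trigMoment (fun p : Nat.Primes => (p : ℝ) ^ (-σ)) (fun p => y * log p + α) m| ≤ C :=
    (exists_bound_norm_primeZeta (by simp [hm, hy.ne'])).imp fun C hC σ hσ =>
      (abs_trigMoment_prime_le hσ.1 y α m).trans (hC σ hσ)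
  choose! C hC using h
  refine ⟨∑ m ∈ Finset.Icc (-L : ℤ) L, |C m|, fun σ hσ m hm hmL => ?_⟩
  exact (hC m hm σ hσ).trans <| (le_abs_self _).trans <| Finset.single_le_sum
    (f := fun m => |C m|) (fun _ _ => abs_nonneg _) (Finset.mem_Icc.2 (abs_le.1 hmL))

lemma exists_bound_tsum_prime_rpow_neg {y α K : ℝ} (hy : 0 < y) (hK0 : 0 < K) (hK1 : K < 1)
    (hS : Summable ({p : Nat.Primes | K < cos (y * log p + α)}.indicator
      fun p => 1 / (p : ℝ))) :
    ∃ M, ∀ σ ∈ Set.Ioc (1 : ℝ) 2, ∑' p : Nat.Primes, (p : ℝ) ^ (-σ) ≤ M := by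
  set B := ∑' p : Nat.Primes,
    {p : Nat.Primes | K < cos (y * log p + α)}.indicator (fun p => 1 / (p : ℝ)) p
  obtain ⟨n, hn⟩ := exists_nat_gt (K / (1 - K))
  have hnK : 0 < n - K * (n + 1) := by
    rw [div_lt_iff₀ (by linarith)] at hn; linarith
  obtain ⟨C, hC⟩ := exists_bound_abs_trigMoment_prime hy α (n + 1)
  refine ⟨((1 - K) * (n + 1) ^ 2 * B + (1 + K) * (n + 1) ^ 2 * C) / (n - K * (n + 1)),
    fun σ hσ => ?_⟩
  have hw : Summable fun p : Nat.Primes => (p : ℝ) ^ (-σ) :=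
    Nat.Primes.summable_rpow.mpr (by linarith [hσ.1])
  have hwv : (fun p : Nat.Primes => (p : ℝ) ^ (-σ)) ≤ fun p : Nat.Primes => 1 / (p : ℝ) :=
    fun p => by
      show (p : ℝ) ^ (-σ) ≤ 1 / (p : ℝ)
      rw [one_div, ← Real.rpow_neg_one]
      exact Real.rpow_le_rpow_of_exponent_le (mod_cast p.prop.one_le) (by linarith [hσ.1])
  have hlow := le_tsum_mul_cos_sub_mul_fejer (θ := fun p : Nat.Primes => y * log p + α) hw
    hK0.le (by exact_mod_cast hC σ hσ)
  have hup := tsum_mul_cos_sub_mul_fejer_le (n + 1) hw (fun p => by positivity) hwv hS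
  rw [le_div_iff₀ hnK]
  push_cast at hup
  linarith

lemma Nat.Primes.summable_one_div_of_tsum_rpow_neg_le {M : ℝ}
    (h : ∀ σ ∈ Set.Ioc (1 : ℝ) 2, ∑' p : Nat.Primes, (p : ℝ) ^ (-σ) ≤ M) :
    Summable fun p : Nat.Primes => 1 / (p : ℝ) := by
  refine summable_of_sum_le (c := M) (fun p => by positivity) fun s => ?_
  have hlim : Filter.Tendsto (fun σ : ℝ => ∑ p ∈ s, (p : ℝ) ^ (-σ))
      (nhdsWithin 1 (Set.Ioi 1)) (nhds (∑ p ∈ s, 1 / (p : ℝ))) :=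
    tendsto_finsetSum s fun p _ => by
      have : ContinuousAt (fun σ : ℝ => (p : ℝ) ^ (-σ)) 1 :=
        (Real.continuousAt_const_rpow (mod_cast p.prop.ne_zero)).comp continuous_neg.continuousAt
      simpa [Real.rpow_neg_one] using this.tendsto.mono_left nhdsWithin_le_nhds
  refine le_of_tendsto hlim ?_
  filter_upwards [Ioc_mem_nhdsGT one_lt_two] with σ hσ
  exact (Summable.sum_le_tsum s (fun p _ => by positivity)
    (Nat.Primes.summable_rpow.mpr (by linarith [hσ.1]))).trans (h σ hσ)

theorem stmt_4_general (y α K : ℝ) (hy : 0 < y)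
    (hK0 : 0 < K) (hK1 : K < 1) :
    ¬ Summable (fun p : {p : ℕ // p.Prime ∧ K < Real.cos (y * Real.log p + α)} =>
      (1 : ℝ) / p) := by
  intro hS
  have hS' : Summable ({p : Nat.Primes | K < cos (y * log p + α)}.indicator
      fun p => 1 / (p : ℝ)) := by
    rw [← summable_subtype_iff_indicator]
    exact (Equiv.subtypeSubtypeEquivSubtypeInter Nat.Prime _).summable_iff.mpr hS
  obtain ⟨M, hM⟩ := exists_bound_tsum_prime_rpow_neg hy hK0 hK1 hS'
  exact Nat.Primes.not_summable_one_div (Nat.Primes.summable_one_div_of_tsum_rpow_neg_le hM)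

theorem stmt_4 (y α K : ℝ) (hy : 0 < y) (hα0 : 0 ≤ α) (hα2 : α < 2 * π)
    (hK0 : 0 < K) (hK1 : K < 1) :
    ¬ Summable (fun p : {p : ℕ // p.Prime ∧ K < Real.cos (y * Real.log p + α)} =>
      (1 : ℝ) / p) :=
  stmt_4_general y α K hy hK0 hK1
end
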